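/- arXiv:math/0409532 — 3 statements merged into one kernel-verified Lean document; each statement's English description precedes it below -/
import Mathlib

section
/- (Norm Lemma) Suppose ξ_p ∈ F, with elements a_i as in the Subfield Generators proposition and a = a_0. For every γ ∈ K^× with l(γ) < p^n, [N_{K/F}(γ)]_F ∈ ⟨[a]_F⟩. If additionally l(γ) ≤ p^n - p^i for some 0 ≤ i < n, then [N_{K/K_i}(γ)]_{K_i} ∈ ⟨[a_i]_{K_i}⟩, and moreover [N_{K/F}(γ)]_F = [a]_F^s if and only if [N_{K/K_i}(γ)]_{K_i} = [a_i]_{K_i}^s. -/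
namespace PC

/-- The subgroup of `p`-th powers of units of `K`. -/
def pPow (p : ℕ) (K : Type) [Field K] : Subgroup Kˣ :=
  (powMonoidHom p : Kˣ →* Kˣ).range

/-- `J(K) = K^×/K^{×p}`, as a multiplicative abelian group. -/
abbrev Jgrp (p : ℕ) (K : Type) [Field K] := Kˣ ⧸ pPow p K

/-- The class `[u] ∈ J` of a unit `u` of `K`. -/
def cls (p : ℕ) {K : Type} [Field K] (u : Kˣ) : Jgrp p K := QuotientGroup.mk u

lemma Jgrp_pow (p : ℕ) {K : Type} [Field K] (x : Jgrp p K) : x ^ p = 1 := by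
  induction x using QuotientGroup.induction_on with
  | H u =>
    show ((QuotientGroup.mk' (pPow p K)) u) ^ p = 1
    rw [← map_pow, QuotientGroup.mk'_apply, QuotientGroup.eq_one_iff]
    exact ⟨u, rfl⟩

/-- The action of a Galois automorphism on `J`. -/
noncomputable def galJ (p : ℕ) {F K : Type} [Field F] [Field K] [Algebra F K]
    (σ : K ≃ₐ[F] K) : Jgrp p K →* Jgrp p K :=
  QuotientGroup.map (pPow p K) (pPow p K) (Units.map (σ : K →* K)) (by
    intro x hx
    rw [Subgroup.mem_comap]
    obtain ⟨v, rfl⟩ := hx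
    exact ⟨Units.map (σ : K →* K) v, by simp [powMonoidHom, map_pow]⟩)

/-- `σ - 1` as an endomorphism of `J` (multiplicatively, `x ↦ σ(x)·x⁻¹`). -/
noncomputable def sub1 (p : ℕ) {F K : Type} [Field F] [Field K] [Algebra F K]
    (σ : K ≃ₐ[F] K) : Jgrp p K →* Jgrp p K :=
  MonoidHom.mk' (fun x => galJ p σ x / x) (by
    intro a b
    show galJ p σ (a * b) / (a * b) = galJ p σ a / a * (galJ p σ b / b)
    rw [map_mul]
    exact mul_div_mul_comm (galJ p σ a) (galJ p σ b) a b)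

/-- `(σ - 1)^k` as an endomorphism of `J`. -/
noncomputable def sub1pow (p : ℕ) {F K : Type} [Field F] [Field K] [Algebra F K]
    (σ : K ≃ₐ[F] K) (k : ℕ) : Jgrp p K →* Jgrp p K :=
  Nat.rec (MonoidHom.id _) (fun _ ih => (sub1 p σ).comp ih) k

/-- The norm endomorphism of `J`, induced by `N_{K/F}` followed by the inclusion of `F` in `K`. -/
noncomputable def normOp (p : ℕ) (F : Type) {K : Type} [Field F] [Field K] [Algebra F K] :
    Jgrp p K →* Jgrp p K :=
  QuotientGroup.map (pPow p K) (pPow p K)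
    (Units.map ((algebraMap F K : F →* K).comp (Algebra.norm F : K →* F))) (by
      intro x hx
      rw [Subgroup.mem_comap]
      obtain ⟨v, rfl⟩ := hx
      exact ⟨Units.map ((algebraMap F K : F →* K).comp (Algebra.norm F : K →* F)) v,
        by simp [powMonoidHom, map_pow]⟩)

/-- The cyclic `𝔽_p[Gal(K/F)]`-submodule of `J` generated by an element. -/
noncomputable def cyc (p : ℕ) (F : Type) {K : Type} [Field F] [Field K] [Algebra F K]
    (x : Jgrp p K) : Subgroup (Jgrp p K) :=
  Subgroup.closure {y | ∃ τ : K ≃ₐ[F] K, galJ p τ x = y}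

/-- The subgroup of `J` fixed pointwise by a subgroup `H` of the Galois group. -/
noncomputable def fixedJ (p : ℕ) {F K : Type} [Field F] [Field K] [Algebra F K]
    (H : Subgroup (K ≃ₐ[F] K)) : Subgroup (Jgrp p K) where
  carrier := {x | ∀ τ ∈ H, galJ p τ x = x}
  one_mem' := by
    intro τ _
    exact map_one (galJ p τ)
  mul_mem' := by
    intro a b ha hb τ hτ
    rw [map_mul, ha τ hτ, hb τ hτ]
  inv_mem' := by
    intro a ha τ hτ
    rw [map_inv, ha τ hτ]

/-- The units of `K` lying in an intermediate field `E`. -/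
def unitsIn {F K : Type} [Field F] [Field K] [Algebra F K]
    (E : IntermediateField F K) : Subgroup Kˣ where
  carrier := {u | (u : K) ∈ E}
  one_mem' := by
    show ((1 : Kˣ) : K) ∈ E
    rw [Units.val_one]
    exact one_mem E
  mul_mem' := by
    intro a b ha hb
    show ((a * b : Kˣ) : K) ∈ E
    rw [Units.val_mul]
    exact mul_mem ha hb
  inv_mem' := by
    intro u hu
    show ((u⁻¹ : Kˣ) : K) ∈ E
    rw [Units.val_inv_eq_inv_val]
    exact inv_mem hu

/-- `[E^×] ⊆ J` : the classes of units of the intermediate field `E`. -/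
noncomputable def clsOf (p : ℕ) {F K : Type} [Field F] [Field K] [Algebra F K]
    (E : IntermediateField F K) : Subgroup (Jgrp p K) :=
  (unitsIn E).map (QuotientGroup.mk' (pPow p K))

/-- `[K_m^×]` for `m ∈ {-∞, 0, 1, 2, ...}`, with `[K_{-∞}^×] = {1}`. -/
noncomputable def clsOfW (p : ℕ) {F K : Type} [Field F] [Field K] [Algebra F K]
    (Ki : ℕ → IntermediateField F K) (m : WithBot ℕ) : Subgroup (Jgrp p K) :=
  m.recBotCoe ⊥ (fun i => clsOf p (Ki i))

/-- `p^m` for `m ∈ {-∞, 0, 1, 2, ...}`, with the convention `p^{-∞} = 0`. -/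
def pPowW (p : ℕ) (m : WithBot ℕ) : ℕ := m.recBotCoe 0 (fun i => p ^ i)

/-- `m ∔ 1` : `-∞ ∔ 1 = 0` and `m ∔ 1 = m + 1` for `m ≥ 0`. -/
def succW (m : WithBot ℕ) : ℕ := m.recBotCoe 0 (fun i => i + 1)

/-- `[N_{E/F}(E^×)] ⊆ J` : classes of norms (to `F`) of units of an intermediate field `E`. -/
noncomputable def normClsOf (p : ℕ) {F K : Type} [Field F] [Field K] [Algebra F K]
    (E : IntermediateField F K) : Subgroup (Jgrp p K) :=
  Subgroup.map (QuotientGroup.mk' (pPow p K))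
    ((Units.map ((algebraMap F K : F →* K).comp (Algebra.norm F : ↥E →* F))).range)

/-- `[N_{K/F}(K^×)] ⊆ J`. -/
noncomputable def normClsTop (p : ℕ) (F K : Type) [Field F] [Field K] [Algebra F K] :
    Subgroup (Jgrp p K) :=
  Subgroup.map (QuotientGroup.mk' (pPow p K))
    ((Units.map ((algebraMap F K : F →* K).comp (Algebra.norm F : K →* F))).range)

/-- `[N_{K/E}(K^×)] ⊆ J` for an intermediate field `E` of `K/F`. -/
noncomputable def relNormCls (p : ℕ) {F K : Type} [Field F] [Field K] [Algebra F K]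
    (E : IntermediateField F K) : Subgroup (Jgrp p K) :=
  Subgroup.map (QuotientGroup.mk' (pPow p K))
    ((Units.map ((algebraMap (↥E) K : ↥E →* K).comp (Algebra.norm (↥E) : K →* ↥E))).range)

/-- `Y` is a direct sum of cyclic `𝔽_p[G]`-submodules of `J`, each of `𝔽_p`-dimension `d`. -/
noncomputable def IsCyclicSumDim (p : ℕ) (F : Type) {K : Type} [Field F] [Field K] [Algebra F K]
    (Y : Subgroup (Jgrp p K)) (d : ℕ) : Prop :=
  ∃ (ι : Type) (g : ι → Jgrp p K),
    (∀ k, Nat.card (cyc p F (g k)) = p ^ d) ∧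
    (∀ k : ι, cyc p F (g k) ⊓ (⨆ k' ∈ {k' : ι | k' ≠ k}, cyc p F (g k')) = ⊥) ∧
    Y = ⨆ k, cyc p F (g k)

/-- The "stage" predicate entering the definition of `i(K/E)` : there is `δ ∈ K^×` whose
norm class `[N_{K/E}(δ)]_E` is nontrivial and with `[δ]^{τ-1} ∈ C` for all `τ ∈ Gal(K/E)`. -/
noncomputable def Stage (p : ℕ) (E : Type) {K : Type} [Field E] [Field K] [Algebra E K]
    (C : Subgroup (Jgrp p K)) : Prop :=
  ∃ δ : Kˣ, (∀ y : E, y ^ p ≠ Algebra.norm E (δ : K)) ∧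
    ∀ τ : K ≃ₐ[E] K, cls p (Units.map (τ : K →* K) δ * δ⁻¹) ∈ C

/-- `m = i(K/F)` : the stage `m` is realized and no smaller stage is. -/
noncomputable def IsIdx (p : ℕ) {F K : Type} [Field F] [Field K] [Algebra F K]
    (Ki : ℕ → IntermediateField F K) (m : WithBot ℕ) : Prop :=
  Stage p F (clsOfW p Ki m) ∧ ∀ i : WithBot ℕ, i < m → ¬ Stage p F (clsOfW p Ki i)

/-- `δ` is an exceptional element of `K/F`, relative to `m = i(K/F)`. -/
noncomputable def IsExceptional (p : ℕ) (F : Type) {K : Type} [Field F] [Field K] [Algebra F K]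
    (Ki : ℕ → IntermediateField F K) (m : WithBot ℕ) (δ : Kˣ) : Prop :=
  (∀ y : F, y ^ p ≠ Algebra.norm F (δ : K)) ∧
    ∀ τ : K ≃ₐ[F] K, cls p (Units.map (τ : K →* K) δ * δ⁻¹) ∈ clsOfW p Ki m

/-!
In characteristic `p` one has `∑_{j < p^(n-i)} σ^(p^i j) = (σ - 1)^(p^n - p^i)` in `𝔽_p[G]`.
The operator `σ - 1` is nilpotent on the cyclic submodule generated by `[γ]`, which has dimension
`l(γ)`, so `l(γ) ≤ p^n - p^i` forces `[N_{K/K_i}(γ)] = 1` in `J`: `N_{K/K_i}(γ) = z^p` with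
`z ∈ K`. Since `K_{i+1} = K_i(r)` with `r^p = a_i` and `r ∉ K_i`, Kummer theory for the generator
`σ^(p^i)` of `Gal(K/K_i)` gives `z = r^e w` with `w ∈ K_i`, whence `N_{K/K_i}(γ) = a_i^e w^p`.
Taking norms down to `F` and using `N_{K_i/F}(a_i) = a` gives the statements over `F`. Since
`ξ_p ∈ F` and `[K_1 : F] = p`, `a` is not a `p`-th power in `F`, so the exponent of `[a]_F` is
determined modulo `p`; this yields the equivalence.
-/

open Module IntermediateField Subgroup

section Galois

variable {F K : Type} [Field F] [Field K] [Algebra F K] [FiniteDimensional F K] [IsGalois F K]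
  {σ : K ≃ₐ[F] K}

lemma fixingSubgroup_eq_zpowers_pow (hσ : ∀ τ, τ ∈ zpowers σ) (E : IntermediateField F K) :
    E.fixingSubgroup = zpowers (σ ^ finrank F E) := by
  have : IsCyclic (K ≃ₐ[F] K) := ⟨⟨σ, hσ⟩⟩
  have hσK : orderOf σ = finrank F E * finrank E K := by
    rw [orderOf_eq_card_of_forall_mem_zpowers hσ, IsGalois.card_aut_eq_finrank,
      finrank_mul_finrank]
  refine (eq_of_le_of_card_ge ?_ ?_).symm
  · rw [zpowers_le, finrank_eq_fixingSubgroup_index]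
    exact pow_index_mem _ σ
  · rw [IsGalois.card_fixingSubgroup_eq_finrank, Nat.card_zpowers,
      orderOf_pow_of_dvd finrank_pos.ne' (hσK ▸ dvd_mul_right _ _), hσK,
      Nat.mul_div_cancel_left _ finrank_pos]

lemma mem_iff_pow_finrank_apply_eq (hσ : ∀ τ, τ ∈ zpowers σ) (E : IntermediateField F K)
    (y : K) : y ∈ E ↔ (σ ^ finrank F E) y = y := by
  constructor
  · intro hy
    exact (fixingSubgroup_eq_zpowers_pow hσ E ▸ mem_zpowers _ : _ ∈ E.fixingSubgroup) ⟨y, hy⟩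
  · intro hy
    rw [← IsGalois.fixedField_fixingSubgroup E, fixingSubgroup_eq_zpowers_pow hσ E]
    rintro ⟨g, hg⟩
    exact (zpowers_le (H := MulAction.stabilizer (K ≃ₐ[F] K) y)).mpr hy hg

lemma algebraMap_norm_eq_prod_pow (hσ : ∀ τ, τ ∈ zpowers σ) (E : IntermediateField F K)
    (x : K) : algebraMap E K (Algebra.norm E x) =
      ∏ j ∈ Finset.range (finrank E K), ((σ ^ finrank F E) ^ j) x := by
  set τ := σ ^ finrank F E
  have hτ : orderOf τ = finrank E K := by
    rw [← Nat.card_zpowers, ← fixingSubgroup_eq_zpowers_pow hσ E,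
      IsGalois.card_fixingSubgroup_eq_finrank]
  rw [Algebra.norm_eq_prod_automorphisms, ← hτ,
    ← Fin.prod_univ_eq_prod_range (fun j => (τ ^ j) x)]
  exact (Fintype.prod_equiv ((finEquivZPowers (isOfFinOrder_of_finite τ)).trans
    ((MulEquiv.subgroupCongr (fixingSubgroup_eq_zpowers_pow hσ E)).symm.toEquiv.trans
      (fixingSubgroupEquiv E).toEquiv)) _ _ (fun _ => rfl)).symm

end Galois

section CharacteristicP

open Polynomial

lemma Module.End.pow_finrank_apply_eq_zero {k V : Type*} [Field k] [AddCommGroup V]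
    [Module k V] {U : Module.End k V} (hU : IsNilpotent U) {W : Submodule k V}
    [FiniteDimensional k W] (hW : Set.MapsTo U W W) {w : V} (hw : w ∈ W) :
    (U ^ finrank k W) w = 0 := by
  have hres : U.restrict hW ^ finrank k W = 0 := by
    rw [← aeval_X_pow (R := k),
      ← (Module.End.isNilpotent.restrict hW hU).charpoly_eq_X_pow_finrank,
      LinearMap.aeval_self_charpoly]
  have := congrArg Subtype.val (LinearMap.congr_fun hres ⟨w, hw⟩)
  rwa [Module.End.pow_restrict _ hW, LinearMap.restrict_apply] at this

lemma geom_sum_X_pow_pow_eq_X_sub_one_pow (p : ℕ) [Fact p.Prime] {i n : ℕ} (hi : i ≤ n) :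
    ∑ j ∈ Finset.range (p ^ (n - i)), ((X : (ZMod p)[X]) ^ p ^ i) ^ j
      = (X - 1) ^ (p ^ n - p ^ i) := by
  have hX : ((X : (ZMod p)[X]) - 1) ^ p ^ i ≠ 0 := pow_ne_zero _ (X_sub_C_ne_zero 1)
  apply mul_right_cancel₀ hX
  have hpow : p ^ i * p ^ (n - i) = p ^ n := by rw [← pow_add, Nat.add_sub_cancel' hi]
  rw [← pow_add, Nat.sub_add_cancel (Nat.pow_le_pow_right (Fact.out : p.Prime).pos hi),
    sub_pow_char_pow, sub_pow_char_pow, one_pow, geom_sum_mul, ← pow_mul, hpow, one_pow]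

lemma sum_pow_pow_apply_eq_zero {p : ℕ} [Fact p.Prime] {V : Type*} [AddCommGroup V]
    [Module (ZMod p) V] {T : Module.End (ZMod p) V} {n i : ℕ} (hi : i ≤ n) (hT : T ^ p ^ n = 1)
    {W : Submodule (ZMod p) V} [FiniteDimensional (ZMod p) W] (hW : Set.MapsTo T W W)
    (hdim : finrank (ZMod p) W ≤ p ^ n - p ^ i) {v : V} (hv : v ∈ W) :
    ∑ j ∈ Finset.range (p ^ (n - i)), ((T ^ p ^ i) ^ j) v = 0 := by
  have hnil : (T - 1) ^ p ^ n = 0 := by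
    simpa [hT] using congrArg (aeval T) (sub_pow_char_pow (X : (ZMod p)[X]) 1 (n := n))
  have hW' : Set.MapsTo ⇑(T - 1) W W := fun w hw => by simpa using W.sub_mem (hW hw) hw
  have hker := Module.End.pow_finrank_apply_eq_zero ⟨_, hnil⟩ hW' hv
  have hsum := congrArg (aeval T) (geom_sum_X_pow_pow_eq_X_sub_one_pow p hi)
  simp only [map_sum, map_pow, map_sub, aeval_X, map_one] at hsum
  rw [← Nat.sub_add_cancel hdim, pow_add] at hsum
  rw [← LinearMap.sum_apply, hsum, Module.End.mul_apply, hker, map_zero]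

lemma prod_pow_pow_apply_eq_one {A : Type*} [CommGroup A] {p : ℕ} [Fact p.Prime]
    (hA : ∀ x : A, x ^ p = 1) {T : Monoid.End A} {n i : ℕ} (hi : i ≤ n) (hT : T ^ p ^ n = 1)
    {H : Subgroup A} (hH : ∀ x ∈ H, T x ∈ H) {l : ℕ} (hcard : Nat.card H = p ^ l)
    (hl : l ≤ p ^ n - p ^ i) {x : A} (hx : x ∈ H) :
    ∏ j ∈ Finset.range (p ^ (n - i)), ((T ^ p ^ i) ^ j) x = 1 := by
  -- Kept opaque: with `letI`, elements of `Module.End` no longer coerce to functions.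
  have : Module (ZMod p) (Additive A) := AddCommGroup.zmodModule fun y => hA y.toMul
  let T' : Module.End (ZMod p) (Additive A) := (MonoidHom.toAdditive T).toZModLinearMap p
  have hT' : ∀ (k : ℕ) (y : Additive A), (T' ^ k) y = .ofMul ((T ^ k) y.toMul) := by
    intro k y
    induction k generalizing y with
    | zero => rfl
    | succ k ih => rw [pow_succ, Module.End.mul_apply, ih, pow_succ]; rfl
  let W := AddSubgroup.toZModSubmodule p H.toAddSubgroup
  have hWcard : Nat.card W = p ^ l := hcard
  have : Finite W := Nat.finite_of_card_ne_zero (by simp [hWcard, (Fact.out : p.Prime).ne_zero])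
  have := Fintype.ofFinite W
  have hW : finrank (ZMod p) W = l := by
    apply Nat.pow_right_injective (Fact.out : p.Prime).two_le
    dsimp only
    rw [← hWcard, Nat.card_eq_fintype_card, Module.card_eq_pow_finrank (K := ZMod p), ZMod.card]
  have := sum_pow_pow_apply_eq_zero (T := T') hi (by ext y; simp [hT', hT]) (W := W)
    (fun y hy => hH _ hy) (hW ▸ hl) (v := .ofMul x) hx
  simpa only [← pow_mul, hT', toMul_ofMul, ← ofMul_prod, ofMul_eq_zero] using this

end CharacteristicP

section Kummer

variable {p : ℕ} {F K : Type} [Field F] [Field K] [Algebra F K]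

variable (p F K) in
noncomputable def galJHom : (K ≃ₐ[F] K) →* Monoid.End (Jgrp p K) where
  toFun := galJ p
  map_one' := by
    ext x
    induction x using QuotientGroup.induction_on
    rfl
  map_mul' τ ρ := by
    ext x
    induction x using QuotientGroup.induction_on
    rfl

lemma mem_cyc_self (x : Jgrp p K) : x ∈ cyc p F x :=
  subset_closure ⟨1, congrArg (· x) (map_one (galJHom p F K))⟩

lemma galJ_mem_cyc (τ : K ≃ₐ[F] K) {x y : Jgrp p K} (hy : y ∈ cyc p F x) :
    galJ p τ y ∈ cyc p F x := by
  have hmap : (cyc p F x).map (galJ p τ) ≤ cyc p F x := by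
    rw [cyc, MonoidHom.map_closure]
    refine closure_mono ?_
    rintro _ ⟨_, ⟨ρ, rfl⟩, rfl⟩
    exact ⟨τ * ρ, congrArg (· x) (map_mul (galJHom p F K) τ ρ)⟩
  exact hmap ⟨y, hy, rfl⟩

lemma exists_pow_eq_algebraMap_norm [FiniteDimensional F K] [IsGalois F K] {n : ℕ}
    (hp : p.Prime) {σ : K ≃ₐ[F] K} (hσ : ∀ τ, τ ∈ zpowers σ)
    (hG : Nat.card (K ≃ₐ[F] K) = p ^ n) {E : IntermediateField F K} {i : ℕ} (hi : i ≤ n)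
    (hE : finrank F E = p ^ i) {γ : Kˣ} {l : ℕ} (hcard : Nat.card (cyc p F (cls p γ)) = p ^ l)
    (hl : l ≤ p ^ n - p ^ i) :
    ∃ z : Kˣ, (z : K) ^ p = algebraMap E K (Algebra.norm E (γ : K)) := by
  have : Fact p.Prime := ⟨hp⟩
  have hEK : finrank E K = p ^ (n - i) := by
    have h := finrank_mul_finrank F E K
    rw [hE, ← IsGalois.card_aut_eq_finrank F K, hG, ← Nat.add_sub_cancel' hi, pow_add] at h
    exact Nat.eq_of_mul_eq_mul_left (pow_pos hp.pos i) h
  have hT : galJHom p F K σ ^ p ^ n = 1 := by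
    rw [← map_pow, ← hG, pow_card_eq_one', map_one]
  -- `by exact` delays elaborating `hcard`; passed directly, unification times out.
  have hprod := prod_pow_pow_apply_eq_one (A := Jgrp p K) (Jgrp_pow p) hi hT
    (H := cyc p F (cls p γ)) (fun _ => galJ_mem_cyc σ) (by exact hcard) hl
    (mem_cyc_self (cls p γ))
  simp only [← map_pow] at hprod
  have hcls : cls p (∏ j ∈ Finset.range (p ^ (n - i)),
      Units.map (((σ ^ p ^ i) ^ j : K ≃ₐ[F] K) : K →* K) γ) = 1 := by
    rw [cls, ← QuotientGroup.mk'_apply, map_prod]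
    exact hprod
  obtain ⟨z, hz⟩ := (QuotientGroup.eq_one_iff _).mp hcls
  refine ⟨z, ?_⟩
  rw [algebraMap_norm_eq_prod_pow hσ E, hE, hEK, ← Units.val_pow_eq_pow_val,
    ← powMonoidHom_apply, hz, Units.coe_prod]
  rfl

lemma exists_eq_pow_mul_of_pow_mem (hp : p.Prime) {E : IntermediateField F K} {τ : K ≃ₐ[F] K}
    (hE : ∀ y, y ∈ E ↔ τ y = y) {r z : K} (hr : r ^ p ∈ E) (hrE : r ∉ E) (hz : z ^ p ∈ E) :
    ∃ (e : ℕ) (w : K), w ∈ E ∧ z = r ^ e * w := by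
  have : Fact p.Prime := ⟨hp⟩
  rcases eq_or_ne z 0 with rfl | hz0
  · exact ⟨0, 0, E.zero_mem, by simp⟩
  have hr0 : r ≠ 0 := fun h => hrE (h ▸ E.zero_mem)
  have hroot : ∀ y : K, y ≠ 0 → y ^ p ∈ E → (τ y / y) ^ p = 1 := fun y hy hyE => by
    rw [div_pow, ← map_pow, (hE _).mp hyE, div_self (pow_ne_zero _ hy)]
  -- `η = τ r / r` is a primitive `p`-th root of unity; if `τ z / z = η ^ e`, then `z / r ^ e`
  -- is fixed by `τ`.
  have hη : IsPrimitiveRoot (τ r / r) p := by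
    rw [IsPrimitiveRoot.iff_orderOf]
    refine orderOf_eq_prime (hroot r hr0 hr) fun h => hrE ((hE r).mpr ?_)
    rwa [div_eq_one_iff_eq hr0] at h
  obtain ⟨e, -, he⟩ := hη.eq_pow_of_pow_eq_one (hroot z hz0 hz)
  refine ⟨e, z / r ^ e, (hE _).mpr ?_, by field_simp⟩
  rw [div_pow, eq_div_iff hz0] at he
  have hτr : τ r ≠ 0 := by simpa using hr0
  rw [map_div₀, map_pow, ← he]
  field_simp

lemma notMem_of_finrank_lt_finrank_sup {E : IntermediateField F K} {r : K}
    (h : finrank F E < finrank F ↥(E ⊔ F⟮r⟯)) : r ∉ E := fun hr => by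
  rw [sup_eq_left.mpr (adjoin_simple_le_iff.mpr hr)] at h
  exact lt_irrefl _ h

lemma exists_norm_eq_pow_mul_pow [FiniteDimensional F K] [IsGalois F K] {n : ℕ} (hp : p.Prime)
    {σ : K ≃ₐ[F] K} (hσ : ∀ τ, τ ∈ zpowers σ) (hG : Nat.card (K ≃ₐ[F] K) = p ^ n)
    {E : IntermediateField F K} {i : ℕ} (hi : i ≤ n) (hE : finrank F E = p ^ i) {a : E} {r : K}
    (hr : r ^ p = a) (hrE : r ∉ E) {γ : Kˣ} {l : ℕ}
    (hcard : Nat.card (cyc p F (cls p γ)) = p ^ l) (hl : l ≤ p ^ n - p ^ i) :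
    ∃ (s : ℕ) (y : E), Algebra.norm E (γ : K) = a ^ s * y ^ p := by
  obtain ⟨z, hz⟩ := exists_pow_eq_algebraMap_norm hp hσ hG hi hE hcard hl
  have hzE : (z : K) ^ p ∈ E := by
    rw [hz, IntermediateField.algebraMap_apply]
    exact SetLike.coe_mem _
  obtain ⟨e, w, hw, hzw⟩ := exists_eq_pow_mul_of_pow_mem hp (mem_iff_pow_finrank_apply_eq hσ E)
    (hr ▸ a.2) hrE hzE
  refine ⟨e, ⟨w, hw⟩, Subtype.ext ?_⟩
  rw [← IntermediateField.algebraMap_apply, ← hz, hzw, mul_pow, ← pow_mul, mul_comm e p,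
    pow_mul, hr]
  rfl

lemma mem_bot_of_pow_eq_algebraMap_pow (hp : p.Prime) {ζ : F} (hζ : IsPrimitiveRoot ζ p)
    {r : K} {g : F} (hr : r ^ p = algebraMap F K (g ^ p)) : r ∈ (⊥ : IntermediateField F K) := by
  have : NeZero p := ⟨hp.ne_zero⟩
  rcases eq_or_ne g 0 with rfl | hg
  · rw [zero_pow hp.ne_zero, map_zero, pow_eq_zero_iff hp.ne_zero] at hr
    exact hr ▸ zero_mem _
  have hgK : algebraMap F K g ≠ 0 := by simpa using hg
  obtain ⟨m, -, hm⟩ := (hζ.map_of_injective (algebraMap F K).injective).eq_pow_of_pow_eq_one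
    (ξ := r / algebraMap F K g) (by rw [div_pow, hr, map_pow, div_self (pow_ne_zero _ hgK)])
  rw [eq_div_iff hgK] at hm
  exact mem_bot.mpr ⟨ζ ^ m * g, by rw [← hm, map_mul, map_pow]⟩

end Kummer

section Norms

lemma modEq_of_pow_mul_pow_eq {p : ℕ} {L : Type} [Field L] (hp : p.Prime) {a : L}
    (ha : ∀ g : L, g ^ p ≠ a) {s t : ℕ} {f g : L} (h : a ^ s * f ^ p = a ^ t * g ^ p)
    (h0 : a ^ s * f ^ p ≠ 0) : s ≡ t [MOD p] := by
  have : Fact p.Prime := ⟨hp⟩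
  have ha0 : a ≠ 0 := by rintro rfl; exact ha 0 (zero_pow hp.ne_zero)
  have hf0 : f ≠ 0 := by rintro rfl; simp [hp.ne_zero] at h0
  have hg0 : g ≠ 0 := by rintro rfl; simp [hp.ne_zero, h] at h0
  set u := Units.mk0 a ha0
  have hu : orderOf (cls p u) = p := by
    refine orderOf_eq_prime (Jgrp_pow p _) fun h1 => ?_
    obtain ⟨v, hv⟩ := (QuotientGroup.eq_one_iff u).mp h1
    exact ha v (by simpa [u] using congrArg Units.val hv)
  have hU : u ^ s * Units.mk0 f hf0 ^ p = u ^ t * Units.mk0 g hg0 ^ p :=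
    Units.ext (by simpa [u] using h)
  have hcls : cls p u ^ s = cls p u ^ t := by
    rw [cls, ← QuotientGroup.mk_pow, ← QuotientGroup.mk_pow, QuotientGroup.eq]
    refine ⟨Units.mk0 f hf0 / Units.mk0 g hg0, ?_⟩
    rw [powMonoidHom_apply, eq_inv_mul_iff_mul_eq, div_pow, ← mul_div_assoc, hU,
      mul_div_cancel_right]
  rwa [pow_eq_pow_iff_modEq (x := cls p u), hu] at hcls

lemma exists_eq_pow_mul_pow_iff_of_modEq {p : ℕ} {L : Type*} [Field L] {a : L} (ha : a ≠ 0)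
    {s t : ℕ} (h : s ≡ t [MOD p]) (x : L) :
    (∃ y, x = a ^ s * y ^ p) ↔ ∃ y, x = a ^ t * y ^ p := by
  wlog hst : s ≤ t generalizing s t
  · exact (this h.symm (le_of_not_ge hst)).symm
  obtain ⟨k, hk⟩ := (Nat.modEq_iff_dvd' hst).mp h
  have ht : t = s + p * k := by omega
  constructor
  · rintro ⟨y, rfl⟩
    exact ⟨y / a ^ k, by rw [ht, div_pow, ← pow_mul, mul_comm k p, pow_add]; field_simp⟩
  · rintro ⟨y, rfl⟩
    exact ⟨a ^ k * y, by rw [ht]; ring⟩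

variable {p : ℕ} {F K : Type} [Field F] [Field K] [Algebra F K]

lemma norm_norm_inclusion {E₀ E : IntermediateField F K} (h : E₀ ≤ E) (x : E) :
    Algebra.norm F (@Algebra.norm E₀ E _ _ (inclusion h).toRingHom.toAlgebra x) =
      Algebra.norm F x := by
  let _ := (inclusion h).toRingHom.toAlgebra
  have : IsScalarTower F E₀ E := IsScalarTower.of_algebraMap_eq fun _ => rfl
  exact Algebra.norm_norm

lemma norm_eq_of_finrank_eq_one {E : IntermediateField F K} (hE : finrank F E = 1) {x : E}
    {f : F} (hx : (x : K) = algebraMap F K f) : Algebra.norm F x = f := by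
  rw [show x = algebraMap F E f from Subtype.ext hx, Algebra.norm_algebraMap, hE, pow_one]

lemma norm_eq_pow_mul_pow_of_norm_eq {E : IntermediateField F K} {a : E} {a₀ : F}
    (ha : Algebra.norm F a = a₀) {x : K} {s : ℕ} {y : E}
    (h : Algebra.norm E x = a ^ s * y ^ p) : Algebra.norm F x = a₀ ^ s * Algebra.norm F y ^ p := by
  rw [← Algebra.norm_norm (S := E), h, map_mul, map_pow, map_pow, ha]

lemma exists_norm_eq_pow_mul_pow_iff [FiniteDimensional F K] (hp : p.Prime)
    {E : IntermediateField F K} {a : E} (ha0 : a ≠ 0) {a₀ : F} (ha : Algebra.norm F a = a₀)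
    (ha₀ : ∀ g : F, g ^ p ≠ a₀) {x : K} (hx : x ≠ 0) {t : ℕ} {y : E}
    (hy : Algebra.norm E x = a ^ t * y ^ p) (s : ℕ) :
    (∃ f : F, Algebra.norm F x = a₀ ^ s * f ^ p) ↔ ∃ y : E, Algebra.norm E x = a ^ s * y ^ p := by
  refine ⟨fun ⟨f, hf⟩ => ?_, fun ⟨y', hy'⟩ => ⟨_, norm_eq_pow_mul_pow_of_norm_eq ha hy'⟩⟩
  have hst : s ≡ t [MOD p] := modEq_of_pow_mul_pow_eq hp ha₀
    (hf.symm.trans (norm_eq_pow_mul_pow_of_norm_eq ha hy)) (hf ▸ Algebra.norm_ne_zero_iff.mpr hx)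
  exact (exists_eq_pow_mul_pow_iff_of_modEq ha0 hst _).mpr ⟨y, hy⟩

end Norms

/-- **Norm Lemma.** With `a_i` as in the Subfield Generators proposition and `a = a_0`:
if `l(γ) < p^n` then `[N_{K/F}(γ)]_F ∈ ⟨[a]_F⟩`; if moreover `l(γ) ≤ p^n - p^i` for some
`0 ≤ i < n`, then `[N_{K/K_i}(γ)]_{K_i} ∈ ⟨[a_i]_{K_i}⟩` and `[N_{K/F}(γ)]_F = [a]_F^s`
iff `[N_{K/K_i}(γ)]_{K_i} = [a_i]_{K_i}^s`. -/
theorem statement_15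
    (p n : ℕ) (hp : p.Prime) (hn : 1 ≤ n)
    (F K : Type) [Field F] [Field K] [Algebra F K]
    [FiniteDimensional F K] [IsGalois F K]
    (σ : K ≃ₐ[F] K) (hσ : ∀ τ : K ≃ₐ[F] K, τ ∈ Subgroup.zpowers σ)
    (hG : Nat.card (K ≃ₐ[F] K) = p ^ n)
    (Ki : ℕ → IntermediateField F K)
    (hKideg : ∀ i, i ≤ n → Module.finrank F ↥(Ki i) = p ^ i)
    (hchain : ∀ i j : ℕ, i ≤ j → j ≤ n → Ki i ≤ Ki j)
    (hξ : ∃ ζ : F, IsPrimitiveRoot ζ p)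
    (a : (i : ℕ) → ↥(Ki i))
    (ha0 : ∀ i : ℕ, i < n → (a i : K) ≠ 0)
    (haKum : ∀ i : ℕ, i < n → ∃ r : K, r ^ p = (a i : K) ∧
      Ki (i + 1) = Ki i ⊔ IntermediateField.adjoin F {r})
    (haNorm : ∀ j i : ℕ, ∀ hji : j < i, ∀ hi : i < n,
      (@Algebra.norm (↥(Ki j)) (↥(Ki i)) _ _
        ((IntermediateField.inclusion (hchain j i hji.le hi.le)).toRingHom.toAlgebra))
        (a i) = a j)
    (aF : F) (haF : algebraMap F K aF = (a 0 : K)) :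
    -- first statement:
    (∀ (γ : Kˣ) (l : ℕ), Nat.card (cyc p F (cls p γ)) = p ^ l → l < p ^ n →
      ∃ (s : ℕ) (f : F), Algebra.norm F (γ : K) = aF ^ s * f ^ p) ∧
    -- second statement:
    (∀ (γ : Kˣ) (l : ℕ), Nat.card (cyc p F (cls p γ)) = p ^ l →
      ∀ i : ℕ, i < n → l ≤ p ^ n - p ^ i →
      (∃ (s : ℕ) (y : ↥(Ki i)), Algebra.norm (↥(Ki i)) (γ : K) = (a i) ^ s * y ^ p) ∧
      ∀ s : ℕ, ((∃ f : F, Algebra.norm F (γ : K) = aF ^ s * f ^ p) ↔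
        (∃ y : ↥(Ki i), Algebra.norm (↥(Ki i)) (γ : K) = (a i) ^ s * y ^ p))) := by
  obtain ⟨ζ, hζ⟩ := hξ
  have hroot : ∀ i < n, ∃ r : K, r ^ p = a i ∧ r ∉ Ki i := fun i hi => by
    obtain ⟨r, hr, hsup⟩ := haKum i hi
    refine ⟨r, hr, notMem_of_finrank_lt_finrank_sup ?_⟩
    rw [← hsup, hKideg i hi.le, hKideg (i + 1) hi]
    exact Nat.pow_lt_pow_right hp.one_lt (lt_add_one i)
  have hNa : ∀ i < n, Algebra.norm F (a i) = aF := fun i hi => by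
    have h0 := norm_eq_of_finrank_eq_one (hKideg 0 (Nat.zero_le n)) haF.symm
    rcases i.eq_zero_or_pos with rfl | hi0
    · exact h0
    · rw [← norm_norm_inclusion (hchain 0 i hi0.le hi.le), haNorm 0 i hi0 hi, h0]
  have haF_not_pow : ∀ g : F, g ^ p ≠ aF := fun g hg => by
    obtain ⟨r, hr, hr0⟩ := hroot 0 hn
    exact hr0 (bot_le (a := Ki 0) (mem_bot_of_pow_eq_algebraMap_pow hp hζ (by rw [hr, ← haF, hg])))
  have hKi : ∀ (γ : Kˣ) (l : ℕ), Nat.card (cyc p F (cls p γ)) = p ^ l → ∀ i < n,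
      l ≤ p ^ n - p ^ i → ∃ (s : ℕ) (y : Ki i), Algebra.norm (Ki i) (γ : K) = a i ^ s * y ^ p :=
    fun γ l hc i hi hl => by
      obtain ⟨r, hr, hrE⟩ := hroot i hi
      exact exists_norm_eq_pow_mul_pow hp hσ hG hi.le (hKideg i hi.le) hr hrE hc hl
  refine ⟨fun γ l hc hl => ?_, fun γ l hc i hi hl => ?_⟩
  · obtain ⟨s, y, hy⟩ := hKi γ l hc 0 hn (by rw [pow_zero]; omega)
    exact ⟨s, _, norm_eq_pow_mul_pow_of_norm_eq (hNa 0 hn) hy⟩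
  · obtain ⟨t, y, hy⟩ := hKi γ l hc i hi hl
    exact ⟨⟨t, y, hy⟩, exists_norm_eq_pow_mul_pow_iff hp (by simpa using ha0 i hi) (hNa i hi)
      haF_not_pow γ.ne_zero hy⟩

end PC
end

section
/- (Proper Subfield Lemma) Let i < n and let z ∈ K^× with [z] ∈ J^{H_i}. Then [z] ∈ [K_i^×] if and only if [N_{K/F}(z)]_F = [1]_F. -/
namespace PC

/-!
If `z = a c^p` with `a ∈ K_i`, then `N_{K/F}(a) = N_{K_i/F}(a)^{[K:K_i]}` is a `p`-th power,
as `p ∣ [K:K_i]`.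

Conversely, let `τ = σ^{p^i}` generate `H_i` and write `τ z = z w^p`. The partial norms of `w`
produce a `p`-th root `y` of `N_{K/K_i}(z)` with `τ y = ε y`, where `ε = N_{K/K_i}(w)`, and then
`x = ∏_{j < p^i} σ^j y` satisfies `x^p = N_{K/F}(z)` and `σ x = ε x`. If `N_{K/F}(z) = f^p`,
then `x / f` is a `p`-th root of unity, which the `p`-group `G` must fix; hence `ε = 1`.
Hilbert 90 for `⟨τ⟩` now gives `w = β / τ β`, so `z β^p` is fixed by `H_i`, i.e. lies in `K_i`.
-/

theorem eq_zpowers_pow_index {G : Type*} [Group G] [Finite G] {σ : G}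
    (hσ : ∀ g : G, g ∈ Subgroup.zpowers σ) (H : Subgroup G) :
    H = Subgroup.zpowers (σ ^ H.index) := by
  have : IsCyclic G := ⟨σ, fun g => Subgroup.mem_zpowers_iff.mp (hσ g)⟩
  have horder : orderOf σ = Nat.card G := orderOf_eq_card_of_forall_mem_zpowers hσ
  refine (Subgroup.eq_of_le_of_card_ge (Subgroup.zpowers_le.mpr (H.pow_index_mem σ)) ?_).symm
  rw [Nat.card_zpowers, orderOf_pow_of_dvd H.index_ne_zero_of_finite
    (horder ▸ H.index_dvd_card), horder, ← H.index_mul_card,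
    Nat.mul_div_cancel_left _ (Nat.pos_of_ne_zero H.index_ne_zero_of_finite)]

theorem cls_eq_cls_iff {p : ℕ} {K : Type} [Field K] {u v : Kˣ} :
    cls p u = cls p v ↔ ∃ c : Kˣ, v = u * c ^ p := by
  rw [cls, cls, QuotientGroup.eq]
  simp only [pPow, MonoidHom.mem_range, powMonoidHom_apply, eq_inv_mul_iff_mul_eq, eq_comm]

theorem mem_clsOf_iff {p : ℕ} {F K : Type} [Field F] [Field K] [Algebra F K]
    {E : IntermediateField F K} {z : Kˣ} :
    cls p z ∈ clsOf p E ↔ ∃ c : Kˣ, (z : K) * (c : K) ^ p ∈ E := by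
  refine ⟨fun ⟨a, ha, haz⟩ => ?_, fun ⟨c, hc⟩ =>
    ⟨z * c ^ p, (by simpa using hc : ((z * c ^ p : Kˣ) : K) ∈ E), ?_⟩⟩
  · obtain ⟨c, rfl⟩ := cls_eq_cls_iff.mp haz
    refine ⟨c⁻¹, ?_⟩
    rwa [← Units.val_pow_eq_pow_val, ← Units.val_mul, mul_assoc, ← mul_pow, mul_inv_cancel,
      one_pow, mul_one]
  · exact cls_eq_cls_iff.mpr ⟨c⁻¹, by rw [mul_assoc, ← mul_pow, mul_inv_cancel, one_pow, mul_one]⟩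

section

variable {F K : Type*} [Field F] [Field K] [Algebra F K]

theorem mem_of_fixingSubgroup_eq_zpowers [FiniteDimensional F K] [IsGalois F K] {E : IntermediateField F K}
    {τ : K ≃ₐ[F] K} (hE : E.fixingSubgroup = Subgroup.zpowers τ) {x : K} (hx : τ x = x) :
    x ∈ E := by
  rw [← IsGalois.fixedField_fixingSubgroup E, IntermediateField.mem_fixedField_iff, hE]
  exact fun g hg => (Subgroup.zpowers_le (H := MulAction.stabilizer _ x)).mpr hx hg

theorem exists_pow_eq_norm_of_mul_pow_mem [FiniteDimensional F K] {p : ℕ}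
    {E : IntermediateField F K} (hp : p ∣ Module.finrank E K) {z c : K} (hc : c ≠ 0)
    (h : z * c ^ p ∈ E) : ∃ f : F, f ^ p = Algebra.norm F z := by
  obtain ⟨r, hr⟩ := hp
  have hnorm : Algebra.norm F (z * c ^ p) = Algebra.norm F (⟨_, h⟩ : E) ^ (p * r) := by
    rw [← hr, ← map_pow, ← Algebra.norm_algebraMap (S := K), Algebra.norm_norm]
    rfl
  have hc' : Algebra.norm F c ≠ 0 := Algebra.norm_ne_zero_iff.mpr hc
  refine ⟨Algebra.norm F (⟨_, h⟩ : E) ^ r / Algebra.norm F c, ?_⟩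
  rw [div_pow, ← pow_mul', ← hnorm, map_mul, map_pow, mul_div_cancel_right₀ _ (pow_ne_zero _ hc')]

section PartialNorm

/-- For `j = orderOf τ` this is the norm to the fixed field of `τ`. -/
def partialNorm (τ : K ≃ₐ[F] K) (j : ℕ) (x : K) : K :=
  ∏ l ∈ Finset.range j, (τ ^ l) x

variable (τ : K ≃ₐ[F] K)

@[simp]
theorem partialNorm_zero (x : K) : partialNorm τ 0 x = 1 := Finset.prod_range_zero _

theorem partialNorm_succ (j : ℕ) (x : K) :
    partialNorm τ (j + 1) x = partialNorm τ j x * (τ ^ j) x :=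
  Finset.prod_range_succ _ j

theorem partialNorm_succ' (j : ℕ) (x : K) :
    partialNorm τ (j + 1) x = x * τ (partialNorm τ j x) := by
  simp only [partialNorm, Finset.prod_range_succ', map_prod, pow_succ', AlgEquiv.mul_apply,
    pow_zero, AlgEquiv.one_apply, mul_comm x]

theorem partialNorm_pow (j m : ℕ) (x : K) :
    partialNorm τ j (x ^ m) = partialNorm τ j x ^ m := by
  simp only [partialNorm, map_pow, Finset.prod_pow]

theorem partialNorm_ne_zero (j : ℕ) {x : K} (hx : x ≠ 0) : partialNorm τ j x ≠ 0 :=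
  Finset.prod_ne_zero_iff.mpr fun _ _ => (map_ne_zero _).mpr hx

theorem apply_partialNorm_mul (j : ℕ) (x : K) :
    τ (partialNorm τ j x) * x = partialNorm τ j x * (τ ^ j) x := by
  rw [mul_comm, ← partialNorm_succ', partialNorm_succ]

theorem pow_apply_eq_mul_partialNorm_pow {p : ℕ} {z w : K} (h : τ z = z * w ^ p) (j : ℕ) :
    (τ ^ j) z = z * partialNorm τ j w ^ p := by
  induction j with
  | zero => simp
  | succ j ih =>
    rw [pow_succ', AlgEquiv.mul_apply, ih, map_mul, map_pow, h, partialNorm_succ', mul_pow,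
      mul_assoc]

theorem exists_pow_eq_partialNorm_of_apply_eq_mul_pow {p q : ℕ} {z w : K}
    (h : τ z = z * w ^ p) :
    ∃ y : K, y ^ p = partialNorm τ (q * p) z ∧ τ y = partialNorm τ (q * p) w * y := by
  set P := ∏ j ∈ Finset.range (q * p), partialNorm τ j w
  have hP :
      ∏ j ∈ Finset.range (q * p), partialNorm τ (j + 1) w = P * partialNorm τ (q * p) w := by
    rw [← mul_one (∏ j ∈ _, _), ← partialNorm_zero τ w,
      ← Finset.prod_range_succ' (fun j => partialNorm τ j w), Finset.prod_range_succ]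
  refine ⟨z ^ q * P, ?_, ?_⟩
  · rw [mul_pow, ← pow_mul, ← Finset.prod_pow, partialNorm,
      Finset.prod_congr rfl fun j _ => pow_apply_eq_mul_partialNorm_pow τ h j,
      Finset.prod_mul_distrib, Finset.prod_const, Finset.card_range]
  · calc τ (z ^ q * P)
        = z ^ q * ∏ j ∈ Finset.range (q * p), (w * τ (partialNorm τ j w)) := by
          rw [map_mul, map_pow, h, map_prod, Finset.prod_mul_distrib, Finset.prod_const,
            Finset.card_range, mul_pow, ← pow_mul, mul_comm p q, mul_assoc]
      _ = partialNorm τ (q * p) w * (z ^ q * P) := by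
          simp only [← partialNorm_succ', hP]
          ring

/-- Dedekind's independence of the characters `τ^j`, `j < orderOf τ`. -/
theorem exists_sum_mul_pow_apply_ne_zero (hτ : IsOfFinOrder τ) {c : ℕ → K} (hc : c 0 ≠ 0) :
    ∃ u : K, ∑ j ∈ Finset.range (orderOf τ), c j * (τ ^ j) u ≠ 0 := by
  let χ : Fin (orderOf τ) → (Kˣ →* K) :=
    fun j => ((τ ^ (j : ℕ) : K ≃ₐ[F] K) : K →* K).comp (Units.coeHom K)
  have hχ : Function.Injective χ := by
    intro j k hjk
    refine Fin.ext (pow_injOn_Iio_orderOf j.2 k.2 (AlgEquiv.ext fun x => ?_))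
    rcases eq_or_ne x 0 with rfl | hx
    · simp
    · exact DFunLike.congr_fun hjk (Units.mk0 x hx)
  by_contra! hall
  have hsum : ∑ j : Fin (orderOf τ), c j • (χ j : Kˣ → K) = 0 := by
    funext u
    simpa [χ, ← Fin.sum_univ_eq_sum_range] using hall u
  exact hc (Fintype.linearIndependent_iff.mp ((linearIndependent_monoidHom Kˣ K).comp χ hχ)
    (fun j => c (j : ℕ)) hsum ⟨0, hτ.orderOf_pos⟩)

/-- Hilbert's Theorem 90 for the cyclic group generated by `τ`. -/
theorem exists_mul_apply_eq_of_partialNorm_eq_one (hτ : IsOfFinOrder τ) {w : K}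
    (h : partialNorm τ (orderOf τ) w = 1) : ∃ β : K, β ≠ 0 ∧ w * τ β = β := by
  obtain ⟨u, hu⟩ :=
    exists_sum_mul_pow_apply_ne_zero τ hτ (c := fun j => partialNorm τ j w) (by simp)
  refine ⟨_, hu, ?_⟩
  set f : ℕ → K := fun j => partialNorm τ j w * (τ ^ j) u
  have hshift : ∀ j, w * τ (f j) = f (j + 1) := fun j => by
    simp only [f, map_mul, ← mul_assoc, ← partialNorm_succ', ← AlgEquiv.mul_apply,
      ← pow_succ']
  have hperiod : f (orderOf τ) = f 0 := by
    simp only [f, h, partialNorm_zero, pow_orderOf_eq_one, pow_zero]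
  change w * τ (∑ j ∈ Finset.range (orderOf τ), f j) =
    ∑ j ∈ Finset.range (orderOf τ), f j
  rw [map_sum, Finset.mul_sum, Finset.sum_congr rfl fun j _ => hshift j]
  have := Finset.sum_range_succ' f (orderOf τ)
  rw [Finset.sum_range_succ, hperiod] at this
  exact add_right_cancel this.symm

end PartialNorm

section PrimePower

variable {p n : ℕ} [Fact p.Prime]

/-- `g` permutes the `p`-th roots of unity as `ζ ↦ ζ^k`, and `k^(p^n) ≡ k [MOD p]`. -/
theorem apply_eq_self_of_pow_eq_one {g : K ≃ₐ[F] K} (hg : g ^ p ^ n = 1) {u : K}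
    (hu : u ^ p = 1) : g u = u := by
  rcases eq_or_ne u 1 with rfl | hu1
  · exact map_one g
  have hord : orderOf u = p := orderOf_eq_prime hu hu1
  have hprim : IsPrimitiveRoot u p := hord ▸ IsPrimitiveRoot.orderOf u
  obtain ⟨k, -, hk⟩ := hprim.eq_pow_of_pow_eq_one
    (by rw [← map_pow, hu, map_one] : g u ^ p = 1)
  have hiter : ∀ m : ℕ, (g ^ m) u = u ^ k ^ m := fun m => by
    induction m with
    | zero => simp
    | succ m ih => rw [pow_succ, AlgEquiv.mul_apply, ← hk, map_pow, ih, ← pow_mul, pow_succ]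
  have hmod : k ^ p ^ n ≡ k [MOD orderOf u] := by
    rw [hord, ← ZMod.natCast_eq_natCast_iff]
    push_cast
    exact ZMod.pow_card_pow (p := p) _
  rw [← hk, ← (hprim.isOfFinOrder (NeZero.ne p)).pow_eq_pow_iff_modEq.mpr hmod,
    ← hiter (p ^ n), hg, AlgEquiv.one_apply]

theorem apply_eq_self_of_pow_eq_algebraMap_pow {g : K ≃ₐ[F] K} (hg : g ^ p ^ n = 1) {x : K}
    {f : F} (hx : x ^ p = algebraMap F K f ^ p) : g x = x := by
  rcases eq_or_ne (algebraMap F K f) 0 with hf | hf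
  · have hp := (Fact.out : p.Prime).ne_zero
    rw [hf, zero_pow hp, pow_eq_zero_iff hp] at hx
    rw [hx, map_zero]
  have hu : (x / algebraMap F K f) ^ p = 1 := by rw [div_pow, hx, div_self (pow_ne_zero _ hf)]
  have := apply_eq_self_of_pow_eq_one hg hu
  rwa [map_div₀, AlgEquiv.commutes, div_left_inj' hf] at this

end PrimePower

theorem algebraMap_norm_eq_partialNorm_partialNorm [FiniteDimensional F K] [IsGalois F K]
    {σ : K ≃ₐ[F] K} (hσ : ∀ g : K ≃ₐ[F] K, g ∈ Subgroup.zpowers σ) {a b : ℕ}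
    (hab : Nat.card (K ≃ₐ[F] K) = a * b) (x : K) :
    algebraMap F K (Algebra.norm F x) = partialNorm σ a (partialNorm (σ ^ a) b x) := by
  have horder : orderOf σ = b * a :=
    (orderOf_eq_card_of_forall_mem_zpowers hσ).trans (hab.trans (mul_comm a b))
  have hbij : Function.Bijective fun m : Fin (b * a) => σ ^ (m : ℕ) := by
    rw [Fintype.bijective_iff_injective_and_card, Fintype.card_fin, ← Nat.card_eq_fintype_card,
      hab]
    exact ⟨fun m m' h => Fin.ext (pow_injOn_Iio_orderOf (by rw [horder]; exact m.2)
      (by rw [horder]; exact m'.2) h), mul_comm b a⟩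
  rw [Algebra.norm_eq_prod_automorphisms,
    ← Fintype.prod_bijective _ hbij (fun m => (σ ^ (m : ℕ)) x) _ fun _ => rfl,
    ← finProdFinEquiv.prod_comp, Fintype.prod_prod_type, Finset.prod_comm]
  simp only [partialNorm, map_prod, ← AlgEquiv.mul_apply, ← pow_mul, ← pow_add]
  rw [← Fin.prod_univ_eq_prod_range]
  refine Finset.prod_congr rfl fun j _ => ?_
  rw [← Fin.prod_univ_eq_prod_range]
  refine Finset.prod_congr rfl fun l _ => ?_
  rw [finProdFinEquiv_apply_val, add_comm]

theorem partialNorm_eq_one_of_norm_eq_pow [FiniteDimensional F K] [IsGalois F K] {p n : ℕ}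
    [Fact p.Prime] {σ : K ≃ₐ[F] K} (hσ : ∀ g : K ≃ₐ[F] K, g ∈ Subgroup.zpowers σ)
    (hσp : σ ^ p ^ n = 1) {a q : ℕ} (hcard : Nat.card (K ≃ₐ[F] K) = a * (q * p)) {z w : K}
    (hz : z ≠ 0) (h : (σ ^ a) z = z * w ^ p) {f : F} (hf : f ^ p = Algebra.norm F z) :
    partialNorm (σ ^ a) (q * p) w = 1 := by
  obtain ⟨y, hy, hτy⟩ := exists_pow_eq_partialNorm_of_apply_eq_mul_pow (σ ^ a) (q := q) h
  have hy0 : y ≠ 0 := by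
    rintro rfl
    exact partialNorm_ne_zero _ _ hz (by rw [← hy, zero_pow (Fact.out : p.Prime).ne_zero])
  set x := partialNorm σ a y
  have hxp : x ^ p = algebraMap F K f ^ p := by
    rw [← partialNorm_pow, hy, ← algebraMap_norm_eq_partialNorm_partialNorm hσ hcard, ← hf,
      map_pow]
  have hx : x * y = x * (partialNorm (σ ^ a) (q * p) w * y) := by
    rw [← hτy, ← apply_partialNorm_mul, apply_eq_self_of_pow_eq_algebraMap_pow hσp hxp]
  have hy := mul_left_cancel₀ (partialNorm_ne_zero σ a hy0) hx
  exact mul_right_cancel₀ hy0 (by rw [one_mul, ← hy])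

end

theorem statement_16_general
    (p n : ℕ) (hp : p.Prime)
    (F K : Type) [Field F] [Field K] [Algebra F K]
    [FiniteDimensional F K] [IsGalois F K]
    (σ : K ≃ₐ[F] K) (hσ : ∀ τ : K ≃ₐ[F] K, τ ∈ Subgroup.zpowers σ)
    (hG : Nat.card (K ≃ₐ[F] K) = p ^ n)
    (Ki : ℕ → IntermediateField F K)
    (hKideg : ∀ i, i ≤ n → Module.finrank F ↥(Ki i) = p ^ i)
    (i : ℕ) (hi : i < n)
    (z : Kˣ) (hz : cls p z ∈ fixedJ p (Ki i).fixingSubgroup) :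
    cls p z ∈ clsOf p (Ki i) ↔ ∃ f : F, f ^ p = Algebra.norm F (z : K) := by
  have : Fact p.Prime := ⟨hp⟩
  set E := Ki i
  set τ := σ ^ p ^ i
  have hfix : E.fixingSubgroup = Subgroup.zpowers τ := by
    have := eq_zpowers_pow_index hσ E.fixingSubgroup
    rwa [← IntermediateField.finrank_eq_fixingSubgroup_index, hKideg i hi.le] at this
  have hcard : Nat.card (K ≃ₐ[F] K) = p ^ i * (p ^ (n - i - 1) * p) := by
    rw [hG, ← pow_succ, ← pow_add]
    congr 1
    omega
  have hrank : Module.finrank E K = p ^ (n - i - 1) * p :=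
    Nat.eq_of_mul_eq_mul_left (pow_pos hp.pos i) (by
      rw [← hcard, IsGalois.card_aut_eq_finrank, ← Module.finrank_mul_finrank F E K,
        hKideg i hi.le])
  have horder : orderOf τ = p ^ (n - i - 1) * p := by
    rw [← Nat.card_zpowers, ← hfix, IsGalois.card_fixingSubgroup_eq_finrank, hrank]
  rw [mem_clsOf_iff]
  constructor
  · rintro ⟨c, hc⟩
    exact exists_pow_eq_norm_of_mul_pow_mem (hrank ▸ dvd_mul_left p _) c.ne_zero hc
  · rintro ⟨f, hf⟩
    obtain ⟨w, hw⟩ := cls_eq_cls_iff.mp (hz τ (hfix ▸ Subgroup.mem_zpowers τ)).symm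
    have hτz : τ z = z * w ^ p := by simpa using congrArg Units.val hw
    have hnorm : partialNorm τ (orderOf τ) w = 1 := horder ▸
      partialNorm_eq_one_of_norm_eq_pow hσ (hG ▸ pow_card_eq_one') hcard z.ne_zero hτz hf
    obtain ⟨β, hβ0, hβ⟩ :=
      exists_mul_apply_eq_of_partialNorm_eq_one τ (isOfFinOrder_of_finite τ) hnorm
    refine ⟨Units.mk0 β hβ0, mem_of_fixingSubgroup_eq_zpowers hfix ?_⟩
    rw [Units.val_mk0, map_mul, map_pow, hτz, mul_assoc, ← mul_pow, hβ]

/-- **Proper Subfield Lemma.** For `i < n` and `[z] ∈ J^{H_i}`: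
`[z] ∈ [K_i^×]` iff `[N_{K/F}(z)]_F = [1]_F`. -/
theorem statement_16
    (p n : ℕ) (hp : p.Prime) (hn : 1 ≤ n)
    (F K : Type) [Field F] [Field K] [Algebra F K]
    [FiniteDimensional F K] [IsGalois F K]
    (σ : K ≃ₐ[F] K) (hσ : ∀ τ : K ≃ₐ[F] K, τ ∈ Subgroup.zpowers σ)
    (hG : Nat.card (K ≃ₐ[F] K) = p ^ n)
    (Ki : ℕ → IntermediateField F K)
    (hKideg : ∀ i, i ≤ n → Module.finrank F ↥(Ki i) = p ^ i)
    (i : ℕ) (hi : i < n)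
    (z : Kˣ) (hz : cls p z ∈ fixedJ p (Ki i).fixingSubgroup) :
    cls p z ∈ clsOf p (Ki i) ↔ ∃ f : F, f ^ p = Algebra.norm F (z : K) :=
  statement_16_general p n hp F K σ hσ hG Ki hKideg i hi z hz

end PC
end

section
/- (Fixed Elements of Length 3 Submodules are Norms Lemma) Suppose p = 2 and n = 2 (so K/F is cyclic of degree 4). Let γ ∈ K^× with l(γ) = 3 and [N_{K/F}(γ)]_F = [1]_F. Then there exists α ∈ K^× such that M_γ^G = ⟨N[α]⟩, where N[α] = [N_{K/F}(α)]. -/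
namespace PC

/-!
Write `x = [γ]` and `f² = N(γ)`. Then `x · σx · σ²x · σ³x = [N(γ)] = 1`, so `M_γ` is generated by
`x, σx, σ²x`, and `l(γ) = 3` makes these independent. In these coordinates `σ` acts by an explicit
matrix over `𝔽₂` whose only nonzero fixed vector is `x · σ²x`. On the field side,
`η = γ σ(γ) / f` satisfies `σ²(η) η = 1`, so Hilbert 90 for the involution `σ²` gives `β` with
`σ²(β) = η β`, and then `N(β) = γ σ²(γ) (β σ(β) σ(γ) / f)²`, i.e. `N[β] = x · σ²x`.
-/

section ExponentTwo

variable {G : Type*} [CommGroup G]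

def boolProd (a b c : G) (e : Bool × Bool × Bool) : G :=
  (bif e.1 then a else 1) * (bif e.2.1 then b else 1) * (bif e.2.2 then c else 1)

lemma inv_eq_self_of_sq (h2 : ∀ y : G, y ^ 2 = 1) (y : G) : y⁻¹ = y :=
  inv_eq_of_mul_eq_one_right (by rw [← sq, h2])

lemma cond_mul_cond_of_sq {x : G} (hx : x ^ 2 = 1) (s t : Bool) :
    (bif s then x else 1) * (bif t then x else 1) = bif s ^^ t then x else 1 := by
  cases s <;> cases t <;> simp [← sq, hx]

lemma boolProd_mul (h2 : ∀ y : G, y ^ 2 = 1) (a b c : G) (e e' : Bool × Bool × Bool) :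
    boolProd a b c e * boolProd a b c e' =
      boolProd a b c (e.1 ^^ e'.1, e.2.1 ^^ e'.2.1, e.2.2 ^^ e'.2.2) := by
  simp only [boolProd, ← cond_mul_cond_of_sq (h2 _)]
  ac_rfl

lemma mem_closure_iff_exists_boolProd (h2 : ∀ y : G, y ^ 2 = 1) {a b c y : G} :
    y ∈ Subgroup.closure {a, b, c} ↔ ∃ e, boolProd a b c e = y := by
  constructor
  · intro hy
    induction hy using Subgroup.closure_induction with
    | mem y hy =>
      rcases hy with rfl | rfl | rfl
      exacts [⟨(true, false, false), by simp [boolProd]⟩,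
        ⟨(false, true, false), by simp [boolProd]⟩, ⟨(false, false, true), by simp [boolProd]⟩]
    | one => exact ⟨(false, false, false), by simp [boolProd]⟩
    | mul _ _ _ _ hy hz =>
      obtain ⟨e, rfl⟩ := hy
      obtain ⟨e', rfl⟩ := hz
      exact ⟨_, (boolProd_mul h2 a b c e e').symm⟩
    | inv y _ hy => rwa [inv_eq_self_of_sq h2]
  · rintro ⟨⟨i, j, k⟩, rfl⟩
    have hmem : ∀ (t : Bool) {z : G}, z ∈ ({a, b, c} : Set G) →
        (bif t then z else 1) ∈ Subgroup.closure {a, b, c} := by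
      intro t z hz
      cases t
      exacts [one_mem _, Subgroup.subset_closure hz]
    exact mul_mem (mul_mem (hmem i (by simp)) (hmem j (by simp))) (hmem k (by simp))

lemma boolProd_injective (h2 : ∀ y : G, y ^ 2 = 1) {a b c : G}
    (hcard : Nat.card (Subgroup.closure {a, b, c}) = 8) : Function.Injective (boolProd a b c) := by
  let ψ : Bool × Bool × Bool → Subgroup.closure {a, b, c} :=
    fun e => ⟨boolProd a b c e, (mem_closure_iff_exists_boolProd h2).2 ⟨e, rfl⟩⟩
  have hψ : Function.Bijective ψ := by
    refine (Nat.bijective_iff_surjective_and_card ψ).2 ⟨?_, by simp [hcard]⟩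
    rintro ⟨y, hy⟩
    obtain ⟨e, rfl⟩ := (mem_closure_iff_exists_boolProd h2).1 hy
    exact ⟨e, rfl⟩
  exact fun e e' h => hψ.1 (Subtype.ext h)

lemma map_boolProd_orbit (h2 : ∀ y : G, y ^ 2 = 1) (g : G →* G) {x : G}
    (hx : g (g (g x)) = x * g x * g (g x)) (e : Bool × Bool × Bool) :
    g (boolProd x (g x) (g (g x)) e) =
      boolProd x (g x) (g (g x)) (e.2.2, e.1 ^^ e.2.2, e.2.1 ^^ e.2.2) := by
  obtain ⟨i, j, k⟩ := e
  calc g (boolProd x (g x) (g (g x)) (i, j, k))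
      = boolProd x (g x) (g (g x)) (false, i, j) * boolProd x (g x) (g (g x)) (k, k, k) := by
        simp only [boolProd, map_mul, Bool.apply_cond g, map_one, hx]
        cases k <;> simp [mul_assoc]
    _ = _ := by rw [boolProd_mul h2]; simp

lemma mem_zpowers_iff_of_sq (h2 : ∀ y : G, y ^ 2 = 1) {y z : G} :
    y ∈ Subgroup.zpowers z ↔ y = 1 ∨ y = z := by
  constructor
  · rintro ⟨k, rfl⟩
    rcases Int.even_or_odd' k with ⟨m, rfl | rfl⟩
    · simp [zpow_mul, h2]
    · simp [zpow_add, zpow_mul, h2]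
  · rintro (rfl | rfl)
    exacts [one_mem _, Subgroup.mem_zpowers _]

lemma mem_closure_and_map_eq_iff (h2 : ∀ y : G, y ^ 2 = 1) (g : G →* G) {x : G}
    (hx : g (g (g x)) = x * g x * g (g x))
    (hcard : Nat.card (Subgroup.closure {x, g x, g (g x)}) = 8) {y : G} :
    y ∈ Subgroup.closure {x, g x, g (g x)} ∧ g y = y ↔ y = 1 ∨ y = x * g (g x) := by
  constructor
  · rintro ⟨hy, hfix⟩
    obtain ⟨e, rfl⟩ := (mem_closure_iff_exists_boolProd h2).1 hy
    rw [map_boolProd_orbit h2 g hx, (boolProd_injective h2 hcard).eq_iff] at hfix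
    have hrot : ∀ e : Bool × Bool × Bool, (e.2.2, e.1 ^^ e.2.2, e.2.1 ^^ e.2.2) = e →
        e = (false, false, false) ∨ e = (true, false, true) := by
      decide
    rcases hrot e hfix with rfl | rfl <;> simp [boolProd]
  · rintro (rfl | rfl)
    · exact ⟨one_mem _, map_one g⟩
    · refine ⟨mul_mem (Subgroup.subset_closure (by simp)) (Subgroup.subset_closure (by simp)), ?_⟩
      calc g (x * g (g x)) = g x ^ 2 * (x * g (g x)) := by rw [map_mul, hx, sq]; ac_rfl
        _ = x * g (g x) := by rw [h2, one_mul]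

end ExponentTwo

lemma exists_pow_eq_of_mem_zpowers {G : Type*} [Group G] [Finite G] {σ τ : G}
    (h : τ ∈ Subgroup.zpowers σ) : ∃ n < orderOf σ, σ ^ n = τ := by
  classical
  simpa using mem_zpowers_iff_mem_range_orderOf.1 h

section Galois

variable {F K : Type} [Field F] [Field K] [Algebra F K]

lemma galJ_mul (p : ℕ) (τ τ' : K ≃ₐ[F] K) (x : Jgrp p K) :
    galJ p (τ * τ') x = galJ p τ (galJ p τ' x) := by
  induction x using QuotientGroup.induction_on with
  | H u => exact congrArg QuotientGroup.mk (Units.ext rfl)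

lemma galJ_pow (p : ℕ) (σ : K ≃ₐ[F] K) (n : ℕ) (x : Jgrp p K) :
    galJ p (σ ^ n) x = (galJ p σ)^[n] x := by
  induction n generalizing x with
  | zero =>
    induction x using QuotientGroup.induction_on with
    | H u => exact congrArg QuotientGroup.mk (Units.ext rfl)
  | succ n ih => rw [pow_succ, galJ_mul, ih, Function.iterate_succ_apply]

lemma cls_eq_cls_of_val_eq_mul_pow {p : ℕ} {u v : Kˣ} {k : K} (hk : k ≠ 0)
    (h : (u : K) = v * k ^ p) : cls p u = cls p v := by
  refine QuotientGroup.eq.2 ⟨(Units.mk0 k hk)⁻¹, Units.ext ?_⟩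
  simp [powMonoidHom_apply, h]

variable [FiniteDimensional F K]

lemma mem_fixedJ_top_iff {p : ℕ} {σ : K ≃ₐ[F] K}
    (hσ : ∀ τ : K ≃ₐ[F] K, τ ∈ Subgroup.zpowers σ) {x : Jgrp p K} :
    x ∈ fixedJ p (⊤ : Subgroup (K ≃ₐ[F] K)) ↔ galJ p σ x = x := by
  refine ⟨fun hx => hx σ trivial, fun hx τ _ => ?_⟩
  obtain ⟨n, -, rfl⟩ := exists_pow_eq_of_mem_zpowers (hσ τ)
  rw [galJ_pow, Function.iterate_fixed hx]

lemma cyc_eq_closure_of_orderOf_eq_four {p : ℕ} {σ : K ≃ₐ[F] K}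
    (hσ : ∀ τ : K ≃ₐ[F] K, τ ∈ Subgroup.zpowers σ) (h4 : orderOf σ = 4) {x : Jgrp p K}
    (hx : galJ p σ (galJ p σ (galJ p σ x)) = x * galJ p σ x * galJ p σ (galJ p σ x)) :
    cyc p F x = Subgroup.closure {x, galJ p σ x, galJ p σ (galJ p σ x)} := by
  apply le_antisymm
  · refine Subgroup.closure_le _ |>.2 ?_
    rintro _ ⟨τ, rfl⟩
    obtain ⟨n, hn, rfl⟩ := exists_pow_eq_of_mem_zpowers (hσ τ)
    have hmem : ∀ y ∈ ({x, galJ p σ x, galJ p σ (galJ p σ x)} : Set (Jgrp p K)),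
        y ∈ Subgroup.closure {x, galJ p σ x, galJ p σ (galJ p σ x)} :=
      fun y hy => Subgroup.subset_closure hy
    rw [h4] at hn
    rw [galJ_pow]
    interval_cases n
    · exact hmem _ (by simp)
    · exact hmem _ (by simp)
    · exact hmem _ (by simp)
    · simp only [Function.iterate_succ, Function.iterate_zero, Function.comp_apply, id, hx]
      exact mul_mem (mul_mem (hmem _ (by simp)) (hmem _ (by simp))) (hmem _ (by simp))
  · refine Subgroup.closure_le _ |>.2 ?_
    have horbit : ∀ n : ℕ, (galJ p σ)^[n] x ∈ cyc p F x :=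
      fun n => Subgroup.subset_closure ⟨σ ^ n, galJ_pow p σ n x⟩
    rintro _ (rfl | rfl | rfl)
    exacts [horbit 0, horbit 1, horbit 2]

lemma ne_zero_of_sq_eq_norm {γ : Kˣ} {f : F} (hf : f ^ 2 = Algebra.norm F (γ : K)) : f ≠ 0 :=
  ne_zero_pow two_ne_zero (hf ▸ Algebra.norm_ne_zero_iff.2 γ.ne_zero)

variable [IsGalois F K]

lemma algebraMap_norm_eq_prod_range_orderOf {σ : K ≃ₐ[F] K}
    (hσ : ∀ τ : K ≃ₐ[F] K, τ ∈ Subgroup.zpowers σ) (x : K) :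
    algebraMap F K (Algebra.norm F x) = ∏ i ∈ Finset.range (orderOf σ), (σ ^ i) x := by
  classical
  rw [Algebra.norm_eq_prod_automorphisms, ← IsCyclic.image_range_orderOf hσ, Finset.prod_image]
  exact fun i hi j hj => pow_injOn_Iio_orderOf (by simpa using hi) (by simpa using hj)

lemma algebraMap_norm_eq_of_orderOf_eq_four {σ : K ≃ₐ[F] K}
    (hσ : ∀ τ : K ≃ₐ[F] K, τ ∈ Subgroup.zpowers σ) (h4 : orderOf σ = 4) (x : K) :
    algebraMap F K (Algebra.norm F x) = x * σ x * σ (σ x) * σ (σ (σ x)) := by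
  simp [algebraMap_norm_eq_prod_range_orderOf hσ, h4, Finset.prod_range_succ]

end Galois

lemma exists_ne_zero_apply_eq_mul_of_involutive {K : Type*} [Field K] (τ : K →+* K)
    (hτ : ∀ x, τ (τ x) = x) (hτ1 : ∃ x, τ x ≠ x) {η : K} (hη : τ η * η = 1) :
    ∃ β ≠ 0, τ β = η * β := by
  have hη0 : η ≠ 0 := right_ne_zero_of_mul_eq_one hη
  have hτη : τ η = η⁻¹ := eq_inv_of_mul_eq_one_left hη
  have key : ∀ θ, τ (θ + η⁻¹ * τ θ) = η * (θ + η⁻¹ * τ θ) := by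
    intro θ
    rw [map_add, map_mul, map_inv₀, hτη, inv_inv, hτ]
    field_simp
    ring
  by_cases h1 : (1 : K) + η⁻¹ * τ 1 = 0
  · obtain ⟨θ, hθ⟩ := hτ1
    refine ⟨θ + η⁻¹ * τ θ, fun h => hθ ?_, key θ⟩
    rw [map_one, mul_one] at h1
    linear_combination (-1 : K) * h + τ θ * h1
  · exact ⟨_, h1, key 1⟩

section CyclicFour

variable {F K : Type} [Field F] [Field K] [Algebra F K] [FiniteDimensional F K] [IsGalois F K]
  {σ : K ≃ₐ[F] K}

lemma galJ_galJ_galJ_cls_of_norm_eq_sq (hσ : ∀ τ : K ≃ₐ[F] K, τ ∈ Subgroup.zpowers σ)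
    (h4 : orderOf σ = 4) {γ : Kˣ} {f : F} (hf : f ^ 2 = Algebra.norm F (γ : K)) :
    galJ 2 σ (galJ 2 σ (galJ 2 σ (cls 2 γ))) =
      cls 2 γ * galJ 2 σ (cls 2 γ) * galJ 2 σ (galJ 2 σ (cls 2 γ)) := by
  have hf0 : algebraMap F K f ≠ 0 := (map_ne_zero _).2 (ne_zero_of_sq_eq_norm hf)
  have hprod : cls 2 γ * galJ 2 σ (cls 2 γ) * galJ 2 σ (galJ 2 σ (cls 2 γ)) *
      galJ 2 σ (galJ 2 σ (galJ 2 σ (cls 2 γ))) = 1 := by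
    refine cls_eq_cls_of_val_eq_mul_pow (v := 1) hf0 ?_
    simp [← algebraMap_norm_eq_of_orderOf_eq_four hσ h4, ← hf]
  rw [← inv_eq_self_of_sq (Jgrp_pow 2) (_ * _ * _)]
  exact (inv_eq_of_mul_eq_one_right hprod).symm

lemma exists_normOp_cls_eq_of_norm_eq_sq (hσ : ∀ τ : K ≃ₐ[F] K, τ ∈ Subgroup.zpowers σ)
    (h4 : orderOf σ = 4) {γ : Kˣ} {f : F} (hf : f ^ 2 = Algebra.norm F (γ : K)) :
    ∃ β : Kˣ, normOp 2 F (cls 2 β) = cls 2 γ * galJ 2 σ (galJ 2 σ (cls 2 γ)) := by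
  have hN := algebraMap_norm_eq_of_orderOf_eq_four hσ h4
  have hσ4 : ∀ x, σ (σ (σ (σ x))) = x := fun x => by
    simpa [h4] using congrArg (· x) (pow_orderOf_eq_one σ)
  have hσ2 : ∃ x, σ (σ x) ≠ x := by
    by_contra! h
    exact pow_ne_one_of_lt_orderOf (x := σ) two_ne_zero (by omega)
      (AlgEquiv.ext fun x => by simpa using h x)
  set c : K := (γ : K) with hc_def
  set f' := algebraMap F K f
  have hf0 : f' ≠ 0 := (map_ne_zero _).2 (ne_zero_of_sq_eq_norm hf)
  have hσf : σ f' = f' := σ.commutes f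
  have hc0 : c ≠ 0 := γ.ne_zero
  have hc : c * σ c * σ (σ c) * σ (σ (σ c)) = f' ^ 2 := by rw [← hN, ← hf, map_pow]
  obtain ⟨β, hβ0, hβ⟩ := exists_ne_zero_apply_eq_mul_of_involutive ((σ : K →+* K).comp σ) hσ4 hσ2
    (η := c * σ c / f') (by
      simp only [RingHom.comp_apply, RingHom.coe_coe, map_div₀, map_mul, hσf]
      field_simp
      linear_combination hc)
  simp only [RingHom.comp_apply, RingHom.coe_coe] at hβ
  refine ⟨Units.mk0 β hβ0, cls_eq_cls_of_val_eq_mul_pow (k := β * σ β * σ c / f') ?_ ?_⟩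
  · simp [hβ0, hf0, hc0]
  · have hσβ : σ (σ (σ β)) = σ c * σ (σ c) / f' * σ β := by
      rw [hβ, map_mul, map_div₀, map_mul, hσf]
    simp only [Units.coe_map, MonoidHom.coe_comp, MonoidHom.coe_coe, Function.comp_apply,
      Units.val_mk0, Units.val_mul, ← hc_def]
    rw [hN, hσβ, hβ]
    field_simp

end CyclicFour

/-- **Fixed Elements of Length 3 Submodules are Norms Lemma.** Let `K/F` be cyclic of
degree `4`, and `γ ∈ K^×` with `l(γ) = 3` and `[N_{K/F}(γ)]_F = [1]_F`.  Then there is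
`α ∈ K^×` with `M_γ^G = ⟨N[α]⟩`. -/
theorem statement_18
    (F K : Type) [Field F] [Field K] [Algebra F K]
    [FiniteDimensional F K] [IsGalois F K]
    (σ : K ≃ₐ[F] K) (hσ : ∀ τ : K ≃ₐ[F] K, τ ∈ Subgroup.zpowers σ)
    (hG : Nat.card (K ≃ₐ[F] K) = 2 ^ 2)
    (γ : Kˣ) (hl : Nat.card (cyc 2 F (cls 2 γ)) = 2 ^ 3)
    (hnorm : ∃ f : F, f ^ 2 = Algebra.norm F (γ : K)) :
    ∃ α : Kˣ,
      cyc 2 F (cls 2 γ) ⊓ fixedJ 2 (⊤ : Subgroup (K ≃ₐ[F] K)) =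
        Subgroup.zpowers (normOp 2 F (cls 2 α)) := by
  obtain ⟨f, hf⟩ := hnorm
  have h4 : orderOf σ = 4 := by rw [orderOf_eq_card_of_forall_mem_zpowers hσ, hG]; norm_num
  have horbit := galJ_galJ_galJ_cls_of_norm_eq_sq hσ h4 hf
  have hM := cyc_eq_closure_of_orderOf_eq_four hσ h4 horbit
  obtain ⟨β, hβ⟩ := exists_normOp_cls_eq_of_norm_eq_sq hσ h4 hf
  refine ⟨β, Subgroup.ext fun y => ?_⟩
  have hcard : Nat.card (cyc 2 F (cls 2 γ)) = 8 := by rw [hl]; norm_num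
  have hJ : ∀ y : Jgrp 2 K, y ^ 2 = 1 := Jgrp_pow 2
  have hfixed := mem_closure_and_map_eq_iff (G := Jgrp 2 K) hJ (galJ 2 σ) horbit
  rw [hM] at hcard ⊢
  rw [Subgroup.mem_inf, mem_fixedJ_top_iff hσ, hβ]
  exact (hfixed hcard).trans (mem_zpowers_iff_of_sq hJ).symm

end PC
end
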